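/- Let H, h > 0 with notation K_α(x) = (1/(√(2π)α))·exp(-x²/(2α²)), and let He_n denote the probabilists' Hermite polynomial of degree n. Then for any z_j, z_{j'}, η, y ∈ ℝ and n ≥ 0, ∫_ℝ K_H((y+y')/2 - (z_j+z_{j'})/2)·K_h((y-y') - (z_j-z_{j'}))·exp(-(y'-η)²/(2hH))·He_n((y'-η)/√(Hh)) dy' = ((H²+h²/4)^{n/2}/(√(2π)(H+h/2)^{n+1}))·exp(-(z_{j'}-η)²/(2(H+h/2)²) - (y-z_j + (z_{j'}-η)(H-h/2)/(H+h/2))²/(2Hh))·He_n((y-z_j)(H-h/2)/√(Hh(H²+h²/4)) + (z_{j'}-η)√(H²+h²/4)/(√(Hh)(H+h/2))). -/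

import Mathlib

/-!
Multiplying out, the two kernels and the weight `exp (-(y' - η) ^ 2 / (2 * h * H))` form a single
Gaussian in `y'` of width `s = H h / (H + h / 2)`, centred at some `m` (completing the square).
After the shift `y' = x + m` the integral becomes `∫ exp (-x² / (2 s²)) He_n (c x + a) dx` with
`c = 1 / √(H h)`. Gaussian integration by parts, `∫ g(x) x f(x) = s² ∫ g f'`, together with
`He_{n+2}(u) = u He_{n+1}(u) - (n + 1) He_n(u)` and `He_{n+1}' = (n + 1) He_n`, shows that these
integrals obey the same three-term recurrence in `n` as `√(2π) s σⁿ He_n (a / σ)` with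
`σ² = 1 - c² s²`; here `σ = √(H² + h²/4) / (H + h/2)`.
-/

open MeasureTheory Real Polynomial

noncomputable def K (α x : ℝ) : ℝ :=
  (1 / (Real.sqrt (2 * π) * α)) * Real.exp (-x ^ 2 / (2 * α ^ 2))

/-- Probabilists' Hermite polynomial evaluated at a real number. -/
noncomputable def He (n : ℕ) (ξ : ℝ) : ℝ := Polynomial.aeval ξ (Polynomial.hermite n)

theorem Polynomial.derivative_hermite_succ (n : ℕ) :
    derivative (hermite (n + 1)) = ((n : ℤ[X]) + 1) * hermite n := by
  induction n with
  | zero => simp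
  | succ k ih =>
    rw [hermite_succ (k + 1), derivative_sub, derivative_mul, derivative_X, ih, derivative_mul,
      derivative_add, derivative_natCast, derivative_one, hermite_succ k]
    push_cast
    ring

theorem Polynomial.hermite_succ_succ (n : ℕ) :
    hermite (n + 2) = X * hermite (n + 1) - ((n : ℤ[X]) + 1) * hermite n := by
  rw [hermite_succ (n + 1), derivative_hermite_succ]

theorem He_zero (x : ℝ) : He 0 x = 1 := by simp [He]

theorem He_one (x : ℝ) : He 1 x = x := by simp [He]

theorem He_succ_succ (n : ℕ) (x : ℝ) :
    He (n + 2) x = x * He (n + 1) x - (n + 1) * He n x := by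
  simp only [He, hermite_succ_succ, map_sub, map_mul, aeval_X, map_add, map_natCast, map_one]

theorem hasDerivAt_He_succ (n : ℕ) (x : ℝ) :
    HasDerivAt (He (n + 1)) ((n + 1) * He n x) x := by
  have h := (hermite (n + 1)).hasDerivAt_aeval x
  rwa [derivative_hermite_succ, map_mul, map_add, map_natCast, map_one] at h

theorem hasDerivAt_exp_neg_sq_div (s x : ℝ) :
    HasDerivAt (fun x => exp (-x ^ 2 / (2 * s ^ 2)))
      (exp (-x ^ 2 / (2 * s ^ 2)) * (-x / s ^ 2)) x := by
  refine (((hasDerivAt_id x).fun_pow 2).fun_neg.div_const (2 * s ^ 2)).exp.congr_deriv ?_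
  rcases eq_or_ne s 0 with rfl | hs
  · simp
  · simp only [id]
    field_simp
    ring

theorem integral_exp_neg_sq_div {s : ℝ} (hs : 0 < s) :
    ∫ x : ℝ, exp (-x ^ 2 / (2 * s ^ 2)) = √(2 * π) * s := by
  have hexp (x : ℝ) : -x ^ 2 / (2 * s ^ 2) = -(1 / (2 * s ^ 2)) * x ^ 2 := by ring
  simp_rw [hexp, integral_gaussian]
  rw [show π / (1 / (2 * s ^ 2)) = 2 * π * s ^ 2 by field_simp, sqrt_mul (by positivity),
    sqrt_sq hs.le]

theorem integral_exp_neg_sq_div_mul_id (s : ℝ) :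
    ∫ x : ℝ, exp (-x ^ 2 / (2 * s ^ 2)) * x = 0 := by
  have h := integral_neg_eq_self (fun x : ℝ => exp (-x ^ 2 / (2 * s ^ 2)) * x) volume
  simp only [neg_sq, mul_neg, integral_neg] at h
  linarith

theorem integrable_exp_neg_sq_div_mul_eval {s : ℝ} (hs : s ≠ 0) (q : ℝ[X]) :
    Integrable fun x : ℝ => exp (-x ^ 2 / (2 * s ^ 2)) * q.eval x := by
  have hb : 0 < 1 / (2 * s ^ 2) := by positivity
  have hexp (x : ℝ) : -x ^ 2 / (2 * s ^ 2) = -(1 / (2 * s ^ 2)) * x ^ 2 := by ring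
  simp_rw [hexp]
  induction q using Polynomial.induction_on' with
  | add p q hp hq => simpa only [eval_add, mul_add] using hp.fun_add hq
  | monomial k a =>
    have hk : (-1 : ℝ) < k := by linarith [k.cast_nonneg (α := ℝ)]
    refine ((integrable_rpow_mul_exp_neg_mul_sq hb hk).const_mul a).congr
      (.of_forall fun x => ?_)
    simp only [eval_monomial, rpow_natCast]
    ring

theorem integral_exp_neg_sq_div_mul_mul_eq {s : ℝ} (hs : s ≠ 0) {f f' : ℝ → ℝ}
    (hf : ∀ x, HasDerivAt f (f' x) x)
    (hxf : Integrable fun x => exp (-x ^ 2 / (2 * s ^ 2)) * (x * f x))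
    (hf' : Integrable fun x => exp (-x ^ 2 / (2 * s ^ 2)) * f' x)
    (hf0 : Integrable fun x => exp (-x ^ 2 / (2 * s ^ 2)) * f x) :
    ∫ x, exp (-x ^ 2 / (2 * s ^ 2)) * (x * f x) =
      s ^ 2 * ∫ x, exp (-x ^ 2 / (2 * s ^ 2)) * f' x := by
  have hfg (x : ℝ) : f x * (exp (-x ^ 2 / (2 * s ^ 2)) * (-x / s ^ 2)) =
      -(s ^ 2)⁻¹ * (exp (-x ^ 2 / (2 * s ^ 2)) * (x * f x)) := by ring
  have hibp := integral_mul_deriv_eq_deriv_mul_of_integrable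
    (fun x _ => hf x) (fun x _ => hasDerivAt_exp_neg_sq_div s x)
    ((hxf.const_mul _).congr (.of_forall fun x => (hfg x).symm))
    (hf'.congr (.of_forall fun x => mul_comm _ _))
    (hf0.congr (.of_forall fun x => mul_comm _ _))
  simp only [hfg, integral_const_mul, mul_comm (f' _)] at hibp
  rwa [neg_mul, neg_inj, inv_mul_eq_iff_eq_mul₀ (pow_ne_zero 2 hs)] at hibp

theorem integrable_exp_neg_sq_div_mul_He {s : ℝ} (hs : s ≠ 0) (n : ℕ) (c a : ℝ) :
    Integrable fun x : ℝ => exp (-x ^ 2 / (2 * s ^ 2)) * He n (c * x + a) := by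
  refine (integrable_exp_neg_sq_div_mul_eval hs
    (((hermite n).map (Int.castRingHom ℝ)).comp (C c * X + C a))).congr (.of_forall fun x => ?_)
  simp [He, aeval_def, eval_map, eval_comp]

theorem integrable_exp_neg_sq_div_mul_id_mul_He {s : ℝ} (hs : s ≠ 0) (n : ℕ) (c a : ℝ) :
    Integrable fun x : ℝ => exp (-x ^ 2 / (2 * s ^ 2)) * (x * He n (c * x + a)) := by
  refine (integrable_exp_neg_sq_div_mul_eval hs
    (X * ((hermite n).map (Int.castRingHom ℝ)).comp (C c * X + C a))).congr
      (.of_forall fun x => ?_)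
  simp [He, aeval_def, eval_map, eval_comp]

theorem integral_exp_neg_sq_div_mul_id_mul_He {s : ℝ} (hs : s ≠ 0) (n : ℕ) (c a : ℝ) :
    ∫ x : ℝ, exp (-x ^ 2 / (2 * s ^ 2)) * (x * He (n + 1) (c * x + a)) =
      c * s ^ 2 * (n + 1) * ∫ x : ℝ, exp (-x ^ 2 / (2 * s ^ 2)) * He n (c * x + a) := by
  have hf (x : ℝ) : HasDerivAt (fun x => He (n + 1) (c * x + a))
      (c * (n + 1) * He n (c * x + a)) x := by
    refine ((hasDerivAt_He_succ n _).comp x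
      (((hasDerivAt_id x).const_mul c).add_const a)).congr_deriv ?_
    simp only [id, mul_one]
    ring
  have hf' (x : ℝ) : exp (-x ^ 2 / (2 * s ^ 2)) * (c * (n + 1) * He n (c * x + a)) =
      c * (n + 1) * (exp (-x ^ 2 / (2 * s ^ 2)) * He n (c * x + a)) := by ring
  have hint := integrable_exp_neg_sq_div_mul_He hs n c a
  rw [integral_exp_neg_sq_div_mul_mul_eq hs hf (integrable_exp_neg_sq_div_mul_id_mul_He hs _ c a)
    ((hint.const_mul _).congr (.of_forall fun x => (hf' x).symm))
    (integrable_exp_neg_sq_div_mul_He hs _ c a), integral_congr_ae (.of_forall hf'),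
    integral_const_mul]
  ring

theorem integral_exp_neg_sq_div_mul_He {s c σ : ℝ} (hs : 0 < s) (hσ : σ ≠ 0)
    (hσc : σ ^ 2 = 1 - c ^ 2 * s ^ 2) (a : ℝ) (n : ℕ) :
    ∫ x : ℝ, exp (-x ^ 2 / (2 * s ^ 2)) * He n (c * x + a) =
      √(2 * π) * s * σ ^ n * He n (a / σ) := by
  induction n using Nat.twoStepInduction with
  | zero => simp only [He_zero, mul_one, pow_zero, integral_exp_neg_sq_div hs]
  | one =>
    have hg : Integrable fun x : ℝ => exp (-x ^ 2 / (2 * s ^ 2)) := by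
      simpa only [eval_one, mul_one] using integrable_exp_neg_sq_div_mul_eval hs.ne' 1
    have hxg : Integrable fun x : ℝ => exp (-x ^ 2 / (2 * s ^ 2)) * x := by
      simpa only [eval_X] using integrable_exp_neg_sq_div_mul_eval hs.ne' X
    have hsplit (x : ℝ) : exp (-x ^ 2 / (2 * s ^ 2)) * He 1 (c * x + a) =
        c * (exp (-x ^ 2 / (2 * s ^ 2)) * x) + a * exp (-x ^ 2 / (2 * s ^ 2)) := by
      rw [He_one]; ring
    rw [integral_congr_ae (.of_forall hsplit), integral_add (hxg.const_mul c) (hg.const_mul a),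
      integral_const_mul, integral_const_mul, integral_exp_neg_sq_div_mul_id,
      integral_exp_neg_sq_div hs, He_one]
    field_simp
    ring
  | more n ih₀ ih₁ =>
    have hsplit (x : ℝ) : exp (-x ^ 2 / (2 * s ^ 2)) * He (n + 2) (c * x + a) =
        c * (exp (-x ^ 2 / (2 * s ^ 2)) * (x * He (n + 1) (c * x + a))) +
          a * (exp (-x ^ 2 / (2 * s ^ 2)) * He (n + 1) (c * x + a)) -
          (n + 1) * (exp (-x ^ 2 / (2 * s ^ 2)) * He n (c * x + a)) := by
      rw [He_succ_succ]; ring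
    have hI₀ := (integrable_exp_neg_sq_div_mul_He hs.ne' n c a).const_mul (n + 1 : ℝ)
    have hI₁ := (integrable_exp_neg_sq_div_mul_He hs.ne' (n + 1) c a).const_mul a
    have hxI₁ := (integrable_exp_neg_sq_div_mul_id_mul_He hs.ne' (n + 1) c a).const_mul c
    rw [integral_congr_ae (.of_forall hsplit), integral_sub (hxI₁.fun_add hI₁) hI₀,
      integral_add hxI₁ hI₁, integral_const_mul, integral_const_mul, integral_const_mul,
      integral_exp_neg_sq_div_mul_id_mul_He hs.ne', ih₀, ih₁, He_succ_succ]
    have harg : σ * (a / σ) = a := mul_div_cancel₀ a hσ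
    linear_combination (√(2 * π) * s * σ ^ n * He n (a / σ) * (n + 1)) * hσc
      - (√(2 * π) * s * σ ^ (n + 1) * He (n + 1) (a / σ)) * harg

theorem K_mul_K (α β a b : ℝ) :
    K α a * K β b =
      1 / (2 * π * α * β) * exp (-a ^ 2 / (2 * α ^ 2) + -b ^ 2 / (2 * β ^ 2)) := by
  rw [K, K, exp_add]
  field_simp
  rw [sq_sqrt (by positivity)]

theorem K_mul_K_mul_exp_eq {H h : ℝ} (hH : 0 < H) (hh : 0 < h) (zj zj' η y y' : ℝ) :
    K H ((y + y') / 2 - (zj + zj') / 2) * K h ((y - y') - (zj - zj')) *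
        exp (-(y' - η) ^ 2 / (2 * h * H)) =
      1 / (2 * π * H * h) *
        exp (-(zj' - η) ^ 2 / (2 * (H + h / 2) ^ 2)
          - (y - zj + (zj' - η) * (H - h / 2) / (H + h / 2)) ^ 2 / (2 * H * h)) *
        exp (-(y' - (zj' + ((y - zj) * (H - h / 2) * (H + h / 2) - (zj' - η) * H * h)
            / (H + h / 2) ^ 2)) ^ 2 / (2 * (H * h / (H + h / 2)) ^ 2)) := by
  have hW : 0 < H + h / 2 := by positivity
  simp only [K_mul_K, mul_assoc, ← exp_add]
  congr 2
  field_simp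
  ring

theorem integral_K_mul_K_mul_exp_mul_He {H h : ℝ} (hH : 0 < H) (hh : 0 < h)
    (zj zj' η y : ℝ) (n : ℕ) :
    ∫ y' : ℝ, K H ((y + y') / 2 - (zj + zj') / 2) * K h ((y - y') - (zj - zj')) *
        exp (-(y' - η) ^ 2 / (2 * h * H)) * He n ((y' - η) / √(H * h)) =
      1 / (2 * π * H * h) * exp (-(zj' - η) ^ 2 / (2 * (H + h / 2) ^ 2)
          - (y - zj + (zj' - η) * (H - h / 2) / (H + h / 2)) ^ 2 / (2 * H * h)) *
        (√(2 * π) * (H * h / (H + h / 2)) * (√(H ^ 2 + h ^ 2 / 4) / (H + h / 2)) ^ n *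
          He n ((zj' + ((y - zj) * (H - h / 2) * (H + h / 2) - (zj' - η) * H * h)
            / (H + h / 2) ^ 2 - η) / √(H * h) / (√(H ^ 2 + h ^ 2 / 4) / (H + h / 2)))) := by
  have hW : 0 < H + h / 2 := by positivity
  have hσc : (√(H ^ 2 + h ^ 2 / 4) / (H + h / 2)) ^ 2 =
      1 - (1 / √(H * h)) ^ 2 * (H * h / (H + h / 2)) ^ 2 := by
    simp only [div_pow, one_pow, sq_sqrt (by positivity : 0 ≤ H * h),
      sq_sqrt (by positivity : 0 ≤ H ^ 2 + h ^ 2 / 4)]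
    field_simp
    ring
  obtain ⟨m, hm⟩ : ∃ m, m =
      zj' + ((y - zj) * (H - h / 2) * (H + h / 2) - (zj' - η) * H * h) / (H + h / 2) ^ 2 :=
    ⟨_, rfl⟩
  have hintegrand (x : ℝ) :
      K H ((y + (x + m)) / 2 - (zj + zj') / 2) * K h ((y - (x + m)) - (zj - zj')) *
        exp (-((x + m) - η) ^ 2 / (2 * h * H)) * He n ((x + m - η) / √(H * h)) =
      1 / (2 * π * H * h) * exp (-(zj' - η) ^ 2 / (2 * (H + h / 2) ^ 2)
          - (y - zj + (zj' - η) * (H - h / 2) / (H + h / 2)) ^ 2 / (2 * H * h)) *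
        (exp (-x ^ 2 / (2 * (H * h / (H + h / 2)) ^ 2)) *
          He n (1 / √(H * h) * x + (m - η) / √(H * h))) := by
    have harg : (x + m - η) / √(H * h) = 1 / √(H * h) * x + (m - η) / √(H * h) := by ring
    rw [K_mul_K_mul_exp_eq hH hh, ← hm, add_sub_cancel_right, harg]
    ring
  rw [← hm, ← integral_add_right_eq_self _ m, integral_congr_ae (.of_forall hintegrand),
    integral_const_mul, integral_exp_neg_sq_div_mul_He (by positivity) (by positivity) hσc]

theorem hermite_integral_identity (H h : ℝ) (hH : 0 < H) (hh : 0 < h)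
    (zj zj' η y : ℝ) (n : ℕ) :
    (∫ y' : ℝ,
        K H ((y + y') / 2 - (zj + zj') / 2) * K h ((y - y') - (zj - zj')) *
          Real.exp (-(y' - η) ^ 2 / (2 * h * H)) *
          He n ((y' - η) / Real.sqrt (H * h))) =
      ((Real.sqrt (H ^ 2 + h ^ 2 / 4)) ^ n / (Real.sqrt (2 * π) * (H + h / 2) ^ (n + 1))) *
        Real.exp (-(zj' - η) ^ 2 / (2 * (H + h / 2) ^ 2)
          - (y - zj + (zj' - η) * (H - h / 2) / (H + h / 2)) ^ 2 / (2 * H * h)) *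
        He n ((y - zj) * (H - h / 2) / Real.sqrt (H * h * (H ^ 2 + h ^ 2 / 4))
          + (zj' - η) * Real.sqrt (H ^ 2 + h ^ 2 / 4) / (Real.sqrt (H * h) * (H + h / 2))) := by
  have hW : 0 < H + h / 2 := by positivity
  have harg : (zj' + ((y - zj) * (H - h / 2) * (H + h / 2) - (zj' - η) * H * h) / (H + h / 2) ^ 2
      - η) / √(H * h) / (√(H ^ 2 + h ^ 2 / 4) / (H + h / 2)) =
      (y - zj) * (H - h / 2) / √(H * h * (H ^ 2 + h ^ 2 / 4)) +
        (zj' - η) * √(H ^ 2 + h ^ 2 / 4) / (√(H * h) * (H + h / 2)) := by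
    have hS : 0 < √(H * h) := by positivity
    have hT : 0 < √(H ^ 2 + h ^ 2 / 4) := by positivity
    have hT2 := sq_sqrt (by positivity : 0 ≤ H ^ 2 + h ^ 2 / 4)
    rw [sqrt_mul (x := H * h) (by positivity)]
    generalize √(H ^ 2 + h ^ 2 / 4) = T at hT hT2 ⊢
    generalize √(H * h) = S at hS ⊢
    field_simp
    linear_combination (-4 * (zj' - η)) * hT2
  have hconst : 1 / (2 * π * H * h) * (√(2 * π) * (H * h / (H + h / 2)) *
      (√(H ^ 2 + h ^ 2 / 4) / (H + h / 2)) ^ n) =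
      √(H ^ 2 + h ^ 2 / 4) ^ n / (√(2 * π) * (H + h / 2) ^ (n + 1)) := by
    have hP : 0 < √(2 * π) := by positivity
    have hP2 := sq_sqrt (by positivity : 0 ≤ 2 * π)
    generalize √(2 * π) = P at hP hP2 ⊢
    generalize √(H ^ 2 + h ^ 2 / 4) = T
    generalize H + h / 2 = W at hW ⊢
    rw [← hP2, div_pow]
    field_simp
    ring
  rw [integral_K_mul_K_mul_exp_mul_He hH hh, harg, ← hconst]
  ring
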